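/- arXiv:2105.14114 — 4 statements merged into one kernel-verified Lean document; each statement's English description precedes it below -/
import Mathlib

section
/- Let n ≥ 2 be a natural number, σ > 0 and ε > 0 real numbers, and let X be a random variable distributed according to the Gamma distribution with shape parameter n − 1 and rate parameter 1/σ² (equivalently, X = (σ²/2)·Y where Y is chi-squared with 2(n−1) degrees of freedom). Then P(X ≥ n(σ² + ε)) ≤ exp(−n·h(ε/σ²)), where h(x) := x − log(1 + x). -/
open MeasureTheory ProbabilityTheory Real Set

/-!
Exponential tilting: for rates `0 < s ≤ r` the Gamma densities satisfy
`f_r(x) = (r/s)^a e^{-(r-s)x} f_s(x)`, so on `[t, ∞)` the first is at most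
`(r/s)^a e^{-(r-s)t}` times a probability density. With `r = 1/σ²`, `s = 1/(σ² + ε)`
and `t = n(σ² + ε)` this constant is `(1 + ε/σ²)^{n-1} e^{-nε/σ²} ≤ e^{-n h(ε/σ²)}`.
-/

namespace ProbabilityTheory

lemma gammaPDFReal_eq_rpow_mul_exp_mul_gammaPDFReal {a r s : ℝ} (hr : 0 ≤ r) (hs : 0 < s)
    (x : ℝ) :
    gammaPDFReal a r x = (r / s) ^ a * exp (-(r - s) * x) * gammaPDFReal a s x := by
  have hrs : r ^ a = (r / s) ^ a * s ^ a := by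
    rw [div_rpow hr hs.le, div_mul_cancel₀ _ (rpow_pos_of_pos hs a).ne']
  have hexp : exp (-(r * x)) = exp (-(r - s) * x) * exp (-(s * x)) := by
    rw [← exp_add]; ring_nf
  unfold gammaPDFReal
  split_ifs
  · rw [hrs, hexp]; ring
  · ring

lemma gammaMeasure_Ici_le {a r s : ℝ} (ha : 0 < a) (hs : 0 < s) (hsr : s ≤ r) (t : ℝ) :
    gammaMeasure a r (Ici t) ≤ ENNReal.ofReal ((r / s) ^ a * exp (-(r - s) * t)) := by
  have hr : 0 ≤ r := hs.le.trans hsr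
  set C := (r / s) ^ a * exp (-(r - s) * t)
  have hC : 0 ≤ C := by positivity
  have hpdf : ∀ x ∈ Ici t, gammaPDF a r x ≤ ENNReal.ofReal C * gammaPDF a s x := by
    intro x (hx : t ≤ x)
    rw [gammaPDF, gammaPDF, ← ENNReal.ofReal_mul hC,
      gammaPDFReal_eq_rpow_mul_exp_mul_gammaPDFReal hr hs]
    refine ENNReal.ofReal_le_ofReal (mul_le_mul_of_nonneg_right ?_ (gammaPDFReal_nonneg ha hs x))
    exact mul_le_mul_of_nonneg_left (exp_le_exp.2 (by nlinarith)) (by positivity)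
  have := isProbabilityMeasure_gammaMeasure ha hs
  calc gammaMeasure a r (Ici t)
      = ∫⁻ x in Ici t, gammaPDF a r x := withDensity_apply _ measurableSet_Ici
    _ ≤ ∫⁻ x in Ici t, ENNReal.ofReal C * gammaPDF a s x :=
        setLIntegral_mono ((measurable_gammaPDFReal a s).ennreal_ofReal.const_mul _) hpdf
    _ = ENNReal.ofReal C * gammaMeasure a s (Ici t) := by
        rw [lintegral_const_mul' _ _ ENNReal.ofReal_ne_top, gammaMeasure,
          withDensity_apply _ measurableSet_Ici]
    _ ≤ ENNReal.ofReal C := mul_le_of_le_one_right' prob_le_one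

end ProbabilityTheory

/-- Chernoff-type tail bound for the Gamma distribution with shape `n − 1` and
rate `1/σ²` (i.e. `(σ²/2)·χ²_{2(n−1)}`): for `n ≥ 2`, `σ > 0`, `ε > 0`,
`P(X ≥ n(σ² + ε)) ≤ exp(−n·h(ε/σ²))` where `h(x) = x − log(1+x)`. -/
theorem gamma_tail_bound (n : ℕ) (hn : 2 ≤ n) (σ ε : ℝ) (hσ : 0 < σ) (hε : 0 < ε) :
    gammaMeasure ((n : ℝ) - 1) (1 / σ ^ 2) {x : ℝ | (n : ℝ) * (σ ^ 2 + ε) ≤ x}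
      ≤ ENNReal.ofReal
          (Real.exp (-(n : ℝ) * (ε / σ ^ 2 - Real.log (1 + ε / σ ^ 2)))) := by
  have hσ2 : 0 < σ ^ 2 := by positivity
  set u := ε / σ ^ 2 with hu_def
  have hu : 0 < u := by positivity
  have hshape : 0 < (n : ℝ) - 1 := by
    have : (2 : ℝ) ≤ n := by exact_mod_cast hn
    linarith
  have hrate : 1 / (σ ^ 2 + ε) ≤ 1 / σ ^ 2 := by gcongr; linarith
  have hratio : 1 / σ ^ 2 / (1 / (σ ^ 2 + ε)) = 1 + u := by rw [hu_def]; field_simp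
  have hexponent : -(1 / σ ^ 2 - 1 / (σ ^ 2 + ε)) * (n * (σ ^ 2 + ε)) = -(n * u) := by
    rw [hu_def]; field_simp; ring
  have hrhs : exp (-n * (u - log (1 + u))) = (1 + u) ^ (n : ℝ) * exp (-(n * u)) := by
    rw [rpow_def_of_pos (by linarith), ← exp_add]; ring_nf
  refine (gammaMeasure_Ici_le hshape (by positivity) hrate _).trans
    (ENNReal.ofReal_le_ofReal ?_)
  rw [hratio, hexponent, hrhs]
  gcongr
  · linarith
  · linarith
end

section
/- Let c > 0 be a real number and define f : (0,∞) → ℝ by f(v) = log v + Σ_{n=1}^∞ v^n/(n·n!). Define F : (0,∞) → ℝ by F(x) = (x + c)·exp(−x c/(x + c)) − e^{−c}·c²·f(c²/(x + c)). Then for every x > 0, F is differentiable at x with derivative F′(x) = exp(−x c/(x + c)). In other words, F is an antiderivative of x ↦ exp(−x c/(x + c)) on (0,∞). -/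
open Real

/-!
Writing `f v = log v + Σ_{n≥1} vⁿ/(n·n!)`, termwise differentiation gives
`f' v = 1/v + Σ_{n≥0} vⁿ/(n+1)! = 1/v + (eᵛ - 1)/v = eᵛ/v`. With `u = c²/(x+c)` one has
`u' = -c²/(x+c)²` and `-xc/(x+c) = u - c`, so by the chain rule the two terms of `F'` contributing
`∓ e^{-c}·eᵘ·c²/(x+c)` cancel and `F' = e^{-c}·eᵘ = exp(-xc/(x+c))`.
-/

noncomputable def expIntegralSeries (v : ℝ) : ℝ :=
  ∑' n : ℕ, v ^ (n + 1) / ((n + 1) * (n + 1).factorial : ℝ)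

theorem hasSum_pow_succ_div_factorial_succ (v : ℝ) :
    HasSum (fun n : ℕ => v ^ (n + 1) / (n + 1).factorial) (exp v - 1) := by
  have := (hasSum_nat_add_iff' 1).mpr (Real.exp_eq_exp_ℝ ▸ NormedSpace.expSeries_div_hasSum_exp v)
  simpa using this

theorem hasDerivAt_expIntegralSeries (v : ℝ) :
    HasDerivAt expIntegralSeries (∑' n : ℕ, v ^ n / (n + 1).factorial) v := by
  set R := |v| + 1
  have hR : ∀ y ∈ Set.Ioo (-R) R, |y| ≤ R := fun y hy => abs_le.2 ⟨hy.1.le, hy.2.le⟩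
  refine hasDerivAt_tsum_of_isPreconnected (u := fun n => R ^ n / n.factorial)
    (g := fun (n : ℕ) (y : ℝ) => y ^ (n + 1) / ((n + 1) * (n + 1).factorial : ℝ))
    (g' := fun (n : ℕ) (y : ℝ) => y ^ n / (n + 1).factorial)
    (t := Set.Ioo (-R) R) (y₀ := 0) (Real.summable_pow_div_factorial R) isOpen_Ioo
    (convex_Ioo _ _).isPreconnected (fun n y _ => ?_) (fun n y hy => ?_) ?_
    (by simp) ?_
  · refine ((hasDerivAt_pow (n + 1) y).div_const ((n + 1) * (n + 1).factorial : ℝ)).congr_deriv ?_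
    rw [Nat.add_sub_cancel, Nat.cast_succ, mul_div_mul_left _ _ (by positivity)]
  · rw [norm_div, norm_pow, Real.norm_eq_abs, RCLike.norm_natCast]
    gcongr
    · exact hR y hy
    · exact n.le_succ
  · have : 0 < R := by positivity
    exact ⟨by linarith, this⟩
  · exact ⟨by linarith [neg_abs_le v], by linarith [le_abs_self v]⟩

theorem hasDerivAt_log_add_expIntegralSeries {v : ℝ} (hv : v ≠ 0) :
    HasDerivAt (fun v => log v + expIntegralSeries v) (exp v / v) v := by
  refine ((hasDerivAt_log hv).add (hasDerivAt_expIntegralSeries v)).congr_deriv ?_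
  have hmul : v * ∑' n : ℕ, v ^ n / (n + 1).factorial = exp v - 1 := by
    rw [← tsum_mul_left, ← (hasSum_pow_succ_div_factorial_succ v).tsum_eq]
    simp only [pow_succ', mul_div_assoc]
  rw [eq_div_iff hv, add_mul, inv_mul_cancel₀ hv, mul_comm, hmul]
  ring

/-- Let `c > 0` and `f(v) = log v + Σ_{n≥1} vⁿ/(n·n!)`. Then
`F(x) = (x + c)·exp(−xc/(x+c)) − e^{−c}·c²·f(c²/(x+c))` is an antiderivative of
`x ↦ exp(−xc/(x+c))` on `(0,∞)`. -/
theorem antideriv_F (c : ℝ) (hc : 0 < c) (x : ℝ) (hx : 0 < x) :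
    HasDerivAt
      (fun y : ℝ => (y + c) * Real.exp (-y * c / (y + c)) -
        Real.exp (-c) * c ^ 2 *
          (Real.log (c ^ 2 / (y + c)) +
            ∑' n : ℕ, (c ^ 2 / (y + c)) ^ (n + 1) / ((n + 1) * Nat.factorial (n + 1) : ℝ)))
      (Real.exp (-x * c / (x + c))) x := by
  have hxc : x + c ≠ 0 := by positivity
  have hu : HasDerivAt (fun y => c ^ 2 / (y + c)) (-c ^ 2 / (x + c) ^ 2) x := by
    refine ((hasDerivAt_const x (c ^ 2)).div ((hasDerivAt_id' x).add_const c) hxc).congr_deriv ?_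
    ring
  have hexponent : HasDerivAt (fun y => -y * c / (y + c)) (-c ^ 2 / (x + c) ^ 2) x := by
    refine (((hasDerivAt_neg' x).mul_const c).div ((hasDerivAt_id' x).add_const c) hxc).congr_deriv ?_
    field_simp
    ring
  have hf := (hasDerivAt_log_add_expIntegralSeries (by positivity : c ^ 2 / (x + c) ≠ 0)).comp x hu
  refine ((((hasDerivAt_id x).add_const c).mul hexponent.exp).sub
    (hf.const_mul (exp (-c) * c ^ 2))).congr_deriv ?_
  have hexp : exp (-x * c / (x + c)) = exp (-c) * exp (c ^ 2 / (x + c)) := by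
    rw [← exp_add]
    congr 1
    field_simp
    ring
  simp only [id_eq, hexp]
  field_simp
  ring
end

section
/- For every real number T ≥ 3 and every real number a with log T ≤ a ≤ T, it holds that ∫_a^T exp(−x·log T/(x + log T)) dx ≤ 12. -/
open Real MeasureTheory intervalIntegral

/-- For every real `T ≥ 3` and every real `a` with `log T ≤ a ≤ T`,
`∫_a^T exp(−x·log T/(x + log T)) dx ≤ 12`. -/
theorem integral_exp_le_twelve (T a : ℝ) (hT : 3 ≤ T)
    (ha : Real.log T ≤ a) (haT : a ≤ T) :
    (∫ x in a..T, Real.exp (-x * Real.log T / (x + Real.log T))) ≤ 12 := by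
  set L := Real.log T with hLdef
  have hT0 : (0:ℝ) < T := by linarith
  have hL1 : 1 ≤ L := by
    rw [hLdef, Real.le_log_iff_exp_le hT0]
    have := Real.exp_one_lt_d9
    linarith
  have hexpL : Real.exp L = T := Real.exp_log hT0
  have hquarter : (1 + L/4)^4 ≤ Real.exp L := by
    have h1 : 1 + L/4 ≤ Real.exp (L/4) := by linarith [Real.add_one_le_exp (L/4)]
    calc (1 + L/4)^4 ≤ (Real.exp (L/4))^4 := by
          apply pow_le_pow_left₀ (by linarith) (by linarith)
      _ = Real.exp L := by
          rw [← Real.exp_nat_mul]; norm_num; ring_nf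
  have hL2T : L^2 ≤ T := by
    nlinarith [sq_nonneg (1 - L/4), sq_nonneg ((1+L/4)^2 - L), hquarter, hexpL]
  have heighth : (1 + L/8)^4 ≤ Real.exp (L/2) := by
    have h1 : 1 + L/8 ≤ Real.exp (L/8) := by linarith [Real.add_one_le_exp (L/8)]
    calc (1 + L/8)^4 ≤ (Real.exp (L/8))^4 := by
          apply pow_le_pow_left₀ (by linarith) (by linarith)
      _ = Real.exp (L/2) := by
          rw [← Real.exp_nat_mul]; norm_num; ring_nf
  have hLsq4 : L^2 ≤ 4 * Real.exp (L/2) := by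
    nlinarith [sq_nonneg (1 - L/8), sq_nonneg ((1+L/8)^2 - L/2), heighth]
  set c := max a (L^2) with hc
  have hac : a ≤ c := le_max_left _ _
  have hcT : c ≤ T := max_le haT hL2T
  have hcL2 : L^2 ≤ c := le_max_right _ _
  have hca : c - a ≤ L^2 := by
    have h1 : max a (L^2) ≤ a + L^2 := max_le (by nlinarith) (by linarith)
    linarith
  have hcont : ContinuousOn (fun x : ℝ => Real.exp (-x * L / (x + L))) (Set.Icc a T) := by
    apply Real.continuous_exp.comp_continuousOn
    apply ContinuousOn.div
    · fun_prop
    · fun_prop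
    · intro x hx
      have := hx.1
      nlinarith
  have hint1 : IntervalIntegrable (fun x : ℝ => Real.exp (-x * L / (x + L))) volume a c := by
    apply (hcont.mono ?_).intervalIntegrable
    rw [Set.uIcc_of_le hac]
    exact Set.Icc_subset_Icc le_rfl hcT
  have hint2 : IntervalIntegrable (fun x : ℝ => Real.exp (-x * L / (x + L))) volume c T := by
    apply (hcont.mono ?_).intervalIntegrable
    rw [Set.uIcc_of_le hcT]
    exact Set.Icc_subset_Icc hac le_rfl
  have hsplit : (∫ x in a..T, Real.exp (-x * L / (x + L)))
      = (∫ x in a..c, Real.exp (-x * L / (x + L))) + ∫ x in c..T, Real.exp (-x * L / (x + L)) :=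
    (intervalIntegral.integral_add_adjacent_intervals hint1 hint2).symm
  have hb1 : (∫ x in a..c, Real.exp (-x * L / (x + L))) ≤ (c - a) * Real.exp (-L/2) := by
    have := intervalIntegral.integral_mono_on hac hint1 (_root_.intervalIntegrable_const (c := Real.exp (-L/2))) ?_
    · simpa [smul_eq_mul] using this
    · intro x hx
      apply Real.exp_le_exp.mpr
      have hx1 : L ≤ x := le_trans ha hx.1
      rw [div_le_iff₀ (by linarith)]
      nlinarith
  have hb2 : (∫ x in c..T, Real.exp (-x * L / (x + L))) ≤ (T - c) * Real.exp (1 - L) := by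
    have := intervalIntegral.integral_mono_on hcT hint2 (_root_.intervalIntegrable_const (c := Real.exp (1-L))) ?_
    · simpa [smul_eq_mul] using this
    · intro x hx
      apply Real.exp_le_exp.mpr
      have hx1 : L^2 ≤ x := le_trans hcL2 hx.1
      have hxpos : 0 < x + L := by nlinarith
      rw [div_le_iff₀ hxpos]
      nlinarith
  have hpiece1 : (c - a) * Real.exp (-L/2) ≤ 4 := by
    have hexp : Real.exp (-L/2) = 1 / Real.exp (L/2) := by
      rw [neg_div, Real.exp_neg, one_div]
    rw [hexp]
    rw [mul_one_div, div_le_iff₀ (Real.exp_pos _)]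
    nlinarith [Real.exp_pos (L/2)]
  have hpiece2 : (T - c) * Real.exp (1 - L) ≤ 3 := by
    have hexp : Real.exp (1 - L) = Real.exp 1 / T := by
      rw [Real.exp_sub, hexpL]
    rw [hexp]
    have he3 : Real.exp 1 ≤ 3 := by
      have := Real.exp_one_lt_d9; linarith
    have h1 : (T - c) * (Real.exp 1 / T) ≤ T * (Real.exp 1 / T) := by
      apply mul_le_mul_of_nonneg_right (by linarith)
      positivity
    have h2 : T * (Real.exp 1 / T) = Real.exp 1 := by
      field_simp
    linarith
  linarith [hsplit, hb1, hb2, hpiece1, hpiece2]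
end

section
/- For every real number x with 0 < x ≤ 1, it holds that 1 − exp(−(x − log(1 + x))) ≥ x²/8. Consequently, 1/(1 − exp(−h(x))) ≤ 8/x² for 0 < x ≤ 1, where h(x) := x − log(1 + x). -/
/-! On `[0, 1]` the exponential bound `exp t ≥ 1 + t + t²/2` at `t = x - x²/4` gives
`h(x) = x - log(1 + x) ≥ x²/4`. Then `exp h ≥ 1 + h` turns this into
`1 - exp(-h) ≥ h/(1 + h) ≥ h/2 ≥ x²/8`, using `h ≤ x ≤ 1`. -/

open Real

theorem sq_div_four_le_sub_log_one_add {x : ℝ} (hx0 : 0 ≤ x) (hx1 : x ≤ 1) :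
    x ^ 2 / 4 ≤ x - log (1 + x) := by
  have ht : 0 ≤ x - x ^ 2 / 4 := by nlinarith
  have hexp : 1 + x ≤ exp (x - x ^ 2 / 4) :=
    calc 1 + x ≤ 1 + (x - x ^ 2 / 4) + (x - x ^ 2 / 4) ^ 2 / 2 := by
          nlinarith [mul_nonneg (sq_nonneg x) (sub_nonneg.2 hx1)]
      _ ≤ exp (x - x ^ 2 / 4) := quadratic_le_exp_of_nonneg ht
  have hlog : log (1 + x) ≤ x - x ^ 2 / 4 := (log_le_iff_le_exp (by linarith)).2 hexp
  linarith

theorem div_one_add_le_one_sub_exp_neg {t : ℝ} (ht : -1 < t) :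
    t / (1 + t) ≤ 1 - exp (-t) := by
  have hpos : 0 < 1 + t := by linarith
  have hexp : exp (-t) ≤ 1 / (1 + t) := by
    rw [exp_neg, inv_eq_one_div]
    exact one_div_le_one_div_of_le hpos (by linarith [add_one_le_exp t])
  have hsplit : 1 - 1 / (1 + t) = t / (1 + t) := by field_simp; ring
  linarith

/-- For `0 < x ≤ 1`, with `h(x) = x − log(1+x)`:
`1 − exp(−h(x)) ≥ x²/8`, and consequently `1/(1 − exp(−h(x))) ≤ 8/x²`. -/
theorem one_sub_exp_h_bound (x : ℝ) (hx0 : 0 < x) (hx1 : x ≤ 1) :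
    x ^ 2 / 8 ≤ 1 - Real.exp (-(x - Real.log (1 + x))) ∧
    1 / (1 - Real.exp (-(x - Real.log (1 + x)))) ≤ 8 / x ^ 2 := by
  set h := x - log (1 + x)
  have hh_lower : x ^ 2 / 4 ≤ h := sq_div_four_le_sub_log_one_add hx0.le hx1
  have hh_nonneg : 0 ≤ h := le_trans (by positivity) hh_lower
  have hh_le_one : h ≤ 1 := by
    have : 0 ≤ log (1 + x) := log_nonneg (by linarith)
    linarith
  have hbound : x ^ 2 / 8 ≤ 1 - exp (-h) :=
    calc x ^ 2 / 8 ≤ h / 2 := by linarith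
      _ ≤ h / (1 + h) := div_le_div_of_nonneg_left hh_nonneg (by linarith) (by linarith)
      _ ≤ 1 - exp (-h) := div_one_add_le_one_sub_exp_neg (by linarith)
  refine ⟨hbound, ?_⟩
  calc 1 / (1 - exp (-h)) ≤ 1 / (x ^ 2 / 8) := one_div_le_one_div_of_le (by positivity) hbound
    _ = 8 / x ^ 2 := by field_simp
end
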